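/- arXiv:math/0605402 — 2 statements merged into one kernel-verified Lean document; each statement's English description precedes it below -/
import Mathlib

section
/- Let ν be a Gibbs measure on Θ and let c_0 c_1 … c_{n−1} be an admissible word. Then ν(Θ_{c_0…c_{n−1}}) = ∫_M ρ_ξ(c_0…c_{n−1}) d((π_s)_*ν)(ξ), where M = {ξ ∈ Θ^s : ξ_0 = c_0} and (π_s)_*ν is the pushforward of ν under π_s. -/
open MeasureTheory Filter Topology

namespace PaperSFT

/-- The two-sided subshift of finite type determined by the transition function `A`. -/
abbrev Theta {k : ℕ} (A : Fin k → Fin k → Bool) : Type :=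
  {w : ℤ → Fin k // ∀ i : ℤ, A (w i) (w (i + 1)) = true}

/-- The one-sided (unstable) subshift of right-infinite admissible words. -/
abbrev ThetaU {k : ℕ} (A : Fin k → Fin k → Bool) : Type :=
  {w : ℕ → Fin k // ∀ i : ℕ, A (w i) (w (i + 1)) = true}

/-- The one-sided (stable) subshift of left-infinite admissible words `… w₁ w₀`. -/
abbrev ThetaS {k : ℕ} (A : Fin k → Fin k → Bool) : Type :=
  {w : ℕ → Fin k // ∀ i : ℕ, A (w (i + 1)) (w i) = true}

/-- The transition matrix of `A`. -/
def tmat {k : ℕ} (A : Fin k → Fin k → Bool) : Matrix (Fin k) (Fin k) ℕ :=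
  fun i j => if A i j then 1 else 0

/-- Some power `N ≥ 1` of the transition matrix has all entries positive. -/
def Mixing {k : ℕ} (A : Fin k → Fin k → Bool) : Prop :=
  ∃ N : ℕ, 1 ≤ N ∧ ∀ i j : Fin k, 0 < (tmat A ^ N) i j

/-- The two-sided shift map `τ`. -/
def shift {k : ℕ} (A : Fin k → Fin k → Bool) : Theta A → Theta A :=
  fun w => ⟨fun i => w.1 (i + 1), fun i => w.2 (i + 1)⟩

/-- The one-sided shift map `τ_u`. -/
def shiftU {k : ℕ} (A : Fin k → Fin k → Bool) : ThetaU A → ThetaU A :=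
  fun w => ⟨fun i => w.1 (i + 1), fun i => w.2 (i + 1)⟩

/-- The cylinder `{v ∈ Θ : v_i = w_i for m ≤ i ≤ n}` (nonnegative coordinates). -/
def cylP {k : ℕ} (A : Fin k → Fin k → Bool) (w : ℕ → Fin k) (m n : ℕ) : Set (Theta A) :=
  {v : Theta A | ∀ i : ℕ, m ≤ i → i ≤ n → v.1 (i : ℤ) = w i}

/-- The cylinder `{v ∈ Θ : v_{-i} = w_i for m ≤ i ≤ n}` (nonpositive coordinates). -/
def cylN {k : ℕ} (A : Fin k → Fin k → Bool) (w : ℕ → Fin k) (m n : ℕ) : Set (Theta A) :=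
  {v : Theta A | ∀ i : ℕ, m ≤ i → i ≤ n → v.1 (-(i : ℤ)) = w i}

/-- The ratio `ν(E)/ν(F)` of the measures of two sets, as a real number. -/
noncomputable def mratio {k : ℕ} {A : Fin k → Fin k → Bool}
    (ν : Measure (Theta A)) (E F : Set (Theta A)) : ℝ :=
  (ν E).toReal / (ν F).toReal

/-- Hölder continuity of a function on a one-sided sequence space, with respect to the
metric `d(w,w') = 2^{-n}` where `n` is the largest integer with `w_i = w'_i` for `i ≤ n`. -/
def HolderOnSeq {k : ℕ} {P : (ℕ → Fin k) → Prop} (φ : {w : ℕ → Fin k // P w} → ℝ) : Prop :=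
  ∃ c : ℝ, 0 < c ∧ ∃ β : ℝ, 0 < β ∧ ∀ w w' : {w : ℕ → Fin k // P w}, ∀ n : ℕ,
    (∀ i ≤ n, w.1 i = w'.1 i) → |φ w - φ w'| ≤ c * (2 : ℝ) ^ (-(n : ℝ) * β)

/-- `ν` is invariant under the two-sided shift. -/
def Invariant {k : ℕ} (A : Fin k → Fin k → Bool) (ν : Measure (Theta A)) : Prop :=
  ∀ S : Set (Theta A), MeasurableSet S → ν (shift A ⁻¹' S) = ν S

/-- `ν` gives positive measure to every cylinder. -/
def PosOnCyl {k : ℕ} (A : Fin k → Fin k → Bool) (ν : Measure (Theta A)) : Prop :=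
  ∀ (w : Theta A) (a b : ℤ),
    0 < ν {v : Theta A | ∀ i : ℤ, a ≤ i → i ≤ b → v.1 i = w.1 i}

/-- The ratios `ν(Θ_{w₀…w_n}) / ν(Θ_{w₁…w_n})` converge to `L` (as `n → ∞`). -/
def URatioLim {k : ℕ} (A : Fin k → Fin k → Bool) (ν : Measure (Theta A))
    (w : ThetaU A) (L : ℝ) : Prop :=
  Tendsto (fun n : ℕ =>
      mratio ν (cylP A w.1 0 (n + 1)) (cylP A (fun i => w.1 (i + 1)) 0 n))
    atTop (𝓝 L)

/-- The ratios `ν({v : v_{-i} = w_i, 0 ≤ i ≤ n}) / ν({v : v_{-i} = w_i, 1 ≤ i ≤ n})`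
converge to `L`. -/
def SRatioLim {k : ℕ} (A : Fin k → Fin k → Bool) (ν : Measure (Theta A))
    (w : ThetaS A) (L : ℝ) : Prop :=
  Tendsto (fun n : ℕ => mratio ν (cylN A w.1 0 n) (cylN A w.1 1 n)) atTop (𝓝 L)

/-- A Gibbs measure: a shift-invariant Borel probability measure which is positive on
cylinders and whose one-sided measure ratios converge to Hölder continuous scaling
functions on `Θ^u` and `Θ^s`. -/
def IsGibbs {k : ℕ} (A : Fin k → Fin k → Bool) (ν : Measure (Theta A)) : Prop :=
  IsProbabilityMeasure ν ∧ Invariant A ν ∧ PosOnCyl A ν ∧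
  (∃ sU : ThetaU A → ℝ, HolderOnSeq sU ∧ ∀ w : ThetaU A, URatioLim A ν w (sU w)) ∧
  (∃ sS : ThetaS A → ℝ, HolderOnSeq sS ∧ ∀ w : ThetaS A, SRatioLim A ν w (sS w))

/-- `c₀ … c_{n-1}` is an admissible word. -/
def AdmWord {k : ℕ} (A : Fin k → Fin k → Bool) (c : ℕ → Fin k) (n : ℕ) : Prop :=
  ∀ i : ℕ, i + 1 < n → A (c i) (c (i + 1)) = true

/-- The set `E_m = {v ∈ Θ : v_{-i} = ξ_i for 0 ≤ i ≤ m and v_j = c_j for 0 ≤ j ≤ n-1}`. -/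
def cylE {k : ℕ} (A : Fin k → Fin k → Bool) (ξ : ThetaS A) (c : ℕ → Fin k)
    (n m : ℕ) : Set (Theta A) :=
  {v : Theta A | (∀ i : ℕ, i ≤ m → v.1 (-(i : ℤ)) = ξ.1 i) ∧
    (∀ j : ℕ, j < n → v.1 (j : ℤ) = c j)}

/-- `ρ_ξ(c₀…c_{n-1}) = r`, i.e. the ratios `ν(E_m)/ν(F_m)` converge to `r`. -/
def RhoLim {k : ℕ} (A : Fin k → Fin k → Bool) (ν : Measure (Theta A))
    (ξ : ThetaS A) (c : ℕ → Fin k) (n : ℕ) (r : ℝ) : Prop :=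
  Tendsto (fun m : ℕ => mratio ν (cylE A ξ c n m) (cylN A ξ.1 0 m)) atTop (𝓝 r)

/-- Prepending an admissible symbol `a` to a right-infinite word `ξ`; this enumerates the
preimages of `ξ` under the one-sided shift `τ_u`. -/
def consU {k : ℕ} (A : Fin k → Fin k → Bool) (a : Fin k) (ξ : ThetaU A)
    (h : A a (ξ.1 0) = true) : ThetaU A :=
  ⟨fun i => Nat.rec a (fun j _ => ξ.1 j) i, by
    intro i
    cases i with
    | zero => exact h
    | succ j => exact ξ.2 j⟩

end PaperSFT

namespace PaperSFT

/-- The projection `π_s : Θ → Θ^s`, `(π_s v)_i = v_{-i}`. -/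
def projS {k : ℕ} (A : Fin k → Fin k → Bool) : Theta A → ThetaS A :=
  fun v => ⟨fun i => v.1 (-(i : ℤ)), by
    intro i
    show A (v.1 (-((i + 1 : ℕ) : ℤ))) (v.1 (-(i : ℤ))) = true
    have h := v.2 (-(i : ℤ) - 1)
    have e1 : (-(i : ℤ) - 1) + 1 = -(i : ℤ) := by ring
    rw [e1] at h
    rw [show (-((i + 1 : ℕ) : ℤ)) = -(i : ℤ) - 1 by push_cast; ring]
    exact h⟩

/-! For each `m`, the `m`-th ratio defining `ρ_ξ` is the conditional probability of the cylinder
`Θ_{c₀…c_{n-1}}` given the past word `ξ₀ … ξ_m`, so by the law of total probability over the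
finitely many past words its integral against `(π_s)_*ν` is exactly `ν(Θ_{c₀…c_{n-1}})`. These ratios
are bounded by `1` and vanish off `M`, so dominated convergence carries the identity to the limit. -/

open ProbabilityTheory

theorem integral_cond_fiber {Ω α : Type*} [MeasurableSpace Ω] [MeasurableSpace α] [Fintype α]
    [DiscreteMeasurableSpace α] {ν : Measure Ω} [IsFiniteMeasure ν] {g : Ω → α}
    (hg : Measurable g) (P : Set Ω) :
    ∫ x, ν[|g ⁻¹' {g x}].real P ∂ν = ν.real P := by
  have hsum := congrArg (fun μ : Measure Ω => μ P) (sum_meas_smul_cond_fiber hg ν)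
  simp only [Measure.coe_finsetSum, Finset.sum_apply, Measure.coe_smul, Pi.smul_apply,
    smul_eq_mul] at hsum
  rw [← integral_map (f := fun a => ν[|g ⁻¹' {a}].real P) hg.aemeasurable
    (measurable_of_finite _).aestronglyMeasurable, integral_fintype .of_finite]
  simp only [Measure.real, Measure.map_apply hg (measurableSet_singleton _), smul_eq_mul,
    ← ENNReal.toReal_mul]
  rw [← ENNReal.toReal_sum fun a _ => ENNReal.mul_ne_top (measure_ne_top _ _)
    (measure_ne_top _ _), hsum]

section PastCylinders

variable {k : ℕ} {A : Fin k → Fin k → Bool}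

def pastWord (m : ℕ) (v : Theta A) : Fin (m + 1) → Fin k := fun i => v.1 (-(i : ℤ))

def stableWord (m : ℕ) (ξ : ThetaS A) : Fin (m + 1) → Fin k := fun i => ξ.1 i

theorem measurable_stableWord (m : ℕ) : Measurable (stableWord (A := A) m) :=
  measurable_pi_lambda _ fun i => (measurable_pi_apply (i : ℕ)).comp measurable_subtype_coe

theorem measurable_projS : Measurable (projS A) :=
  .subtype_mk <| measurable_pi_lambda (fun v : Theta A => fun i : ℕ => v.1 (-(i : ℤ))) fun i =>
    (measurable_pi_apply (-(i : ℤ))).comp measurable_subtype_coe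

theorem measurable_pastWord (m : ℕ) : Measurable (pastWord (A := A) m) :=
  (measurable_stableWord m).comp measurable_projS

theorem cylN_eq_preimage_pastWord (ξ : ThetaS A) (m : ℕ) :
    cylN A ξ.1 0 m = pastWord m ⁻¹' {stableWord m ξ} := by
  ext v
  simp only [cylN, Set.mem_ofPred_eq, Set.mem_preimage, Set.mem_singleton_iff, funext_iff,
    pastWord, stableWord, Fin.forall_iff, Nat.lt_succ_iff, zero_le, true_implies]

theorem cylE_eq_inter {n : ℕ} (hn : 1 ≤ n) (ξ : ThetaS A) (c : ℕ → Fin k) (m : ℕ) :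
    cylE A ξ c n m = pastWord m ⁻¹' {stableWord m ξ} ∩ cylP A c 0 (n - 1) := by
  rw [← cylN_eq_preimage_pastWord]
  ext v
  simp only [cylE, cylN, cylP, Set.mem_inter_iff, Set.mem_ofPred_eq, zero_le, true_implies]
  exact and_congr_right' (forall_congr' fun j => ⟨fun h hj => h (by omega),
    fun h hj => h (by omega)⟩)

theorem mratio_inter_self (ν : Measure (Theta A)) {F : Set (Theta A)} (hF : MeasurableSet F)
    (P : Set (Theta A)) : mratio ν (F ∩ P) F = ν[|F].real P := by
  rw [mratio, Measure.real, cond_apply hF, ENNReal.toReal_mul, ENNReal.toReal_inv,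
    div_eq_inv_mul]

noncomputable def pastCondProb (ν : Measure (Theta A)) (P : Set (Theta A)) (m : ℕ)
    (ξ : ThetaS A) : ℝ :=
  ν[|pastWord m ⁻¹' {stableWord m ξ}].real P

theorem mratio_cylE_cylN (ν : Measure (Theta A)) {n : ℕ} (hn : 1 ≤ n) (ξ : ThetaS A)
    (c : ℕ → Fin k) (m : ℕ) :
    mratio ν (cylE A ξ c n m) (cylN A ξ.1 0 m) = pastCondProb ν (cylP A c 0 (n - 1)) m ξ := by
  rw [cylE_eq_inter hn, cylN_eq_preimage_pastWord,
    mratio_inter_self ν (measurable_pastWord m (measurableSet_singleton _)), pastCondProb]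

theorem measurable_pastCondProb (ν : Measure (Theta A)) (P : Set (Theta A)) (m : ℕ) :
    Measurable (pastCondProb ν P m) :=
  (measurable_of_finite fun w => ν[|pastWord m ⁻¹' {w}].real P).comp (measurable_stableWord m)

theorem norm_pastCondProb_le_one (ν : Measure (Theta A)) (P : Set (Theta A)) (m : ℕ)
    (ξ : ThetaS A) : ‖pastCondProb ν P m ξ‖ ≤ 1 := by
  rw [pastCondProb, Real.norm_of_nonneg measureReal_nonneg]
  exact measureReal_le_one

theorem integral_pastCondProb (ν : Measure (Theta A)) [IsFiniteMeasure ν] (P : Set (Theta A))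
    (m : ℕ) : ∫ ξ, pastCondProb ν P m ξ ∂ν.map (projS A) = ν.real P := by
  rw [integral_map measurable_projS.aemeasurable
    (measurable_pastCondProb ν P m).aestronglyMeasurable]
  exact integral_cond_fiber (measurable_pastWord m) P

theorem pastCondProb_cylP_eq_zero (ν : Measure (Theta A)) {c : ℕ → Fin k} (N m : ℕ)
    {ξ : ThetaS A} (hξ : ξ.1 0 ≠ c 0) : pastCondProb ν (cylP A c 0 N) m ξ = 0 := by
  have hdisj : pastWord m ⁻¹' {stableWord m ξ} ∩ cylP A c 0 N = ∅ := by
    refine Set.eq_empty_of_forall_notMem fun v ⟨hpast, hfut⟩ => hξ ?_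
    have h0 := congrFun hpast 0
    simp only [pastWord, stableWord, Fin.val_zero, Nat.cast_zero, neg_zero] at h0
    rw [← h0]
    exact hfut 0 le_rfl (Nat.zero_le _)
  rw [pastCondProb, Measure.real, cond_apply (measurable_pastWord m (measurableSet_singleton _)),
    hdisj, measure_empty, mul_zero, ENNReal.toReal_zero]

end PastCylinders

theorem gibbs_ratio_decomposition_general
    (k : ℕ) (A : Fin k → Fin k → Bool)
    (ν : Measure (Theta A)) (hν : IsGibbs A ν)
    (c : ℕ → Fin k) (n : ℕ) (hn : 1 ≤ n)
    (ρval : ThetaS A → ℝ)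
    (hρ : ∀ ξ : ThetaS A, ξ.1 0 = c 0 → RhoLim A ν ξ c n (ρval ξ)) :
    (ν (cylP A c 0 (n - 1))).toReal =
      ∫ ξ in {ξ : ThetaS A | ξ.1 0 = c 0}, ρval ξ ∂(ν.map (projS A)) := by
  have : IsProbabilityMeasure ν := hν.1
  set P := cylP A c 0 (n - 1)
  set M := {ξ : ThetaS A | ξ.1 0 = c 0}
  have hM : MeasurableSet M := (show Measurable fun ξ : ThetaS A => ξ.1 0 from
    (measurable_pi_apply 0).comp measurable_subtype_coe) (measurableSet_singleton (c 0))
  have hlim : Tendsto (fun m => ∫ ξ in M, pastCondProb ν P m ξ ∂ν.map (projS A)) atTop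
      (𝓝 (∫ ξ in M, ρval ξ ∂ν.map (projS A))) :=
    tendsto_integral_of_dominated_convergence (fun _ => 1)
      (fun m => (measurable_pastCondProb ν P m).aestronglyMeasurable.restrict)
      (integrable_const 1) (fun m => ae_of_all _ (norm_pastCondProb_le_one ν P m))
      ((ae_restrict_iff' hM).2 (ae_of_all _ fun ξ hξ => by
        simpa only [RhoLim, mratio_cylE_cylN ν hn] using hρ ξ hξ))
  have hconst (m : ℕ) : ∫ ξ in M, pastCondProb ν P m ξ ∂ν.map (projS A) = ν.real P := by
    rw [setIntegral_eq_integral_of_forall_compl_eq_zero (s := M)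
      fun ξ hξ => pastCondProb_cylP_eq_zero ν (n - 1) m hξ, integral_pastCondProb]
  simp only [hconst] at hlim
  exact tendsto_nhds_unique tendsto_const_nhds hlim

/-- **Ratio decomposition of a Gibbs measure.**  For a Gibbs measure `ν` and an admissible
word `c₀…c_{n-1}`, `ν(Θ_{c₀…c_{n-1}}) = ∫_M ρ_ξ(c₀…c_{n-1}) d((π_s)_*ν)(ξ)`, where
`M = {ξ ∈ Θ^s : ξ₀ = c₀}`. -/
theorem gibbs_ratio_decomposition
    (k : ℕ) (hk : 1 ≤ k) (A : Fin k → Fin k → Bool) (hA : Mixing A)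
    (ν : Measure (Theta A)) (hν : IsGibbs A ν)
    (c : ℕ → Fin k) (n : ℕ) (hn : 1 ≤ n) (hc : AdmWord A c n)
    (ρval : ThetaS A → ℝ)
    (hρ : ∀ ξ : ThetaS A, ξ.1 0 = c 0 → RhoLim A ν ξ c n (ρval ξ)) :
    (ν (cylP A c 0 (n - 1))).toReal =
      ∫ ξ in {ξ : ThetaS A | ξ.1 0 = c 0}, ρval ξ ∂(ν.map (projS A)) :=
  gibbs_ratio_decomposition_general k A ν hν c n hn ρval hρ

end PaperSFT
end

section
/- Let α ∈ (0,1], H ≥ 0, m > 0, C > 0 and ν ∈ (0,1). Let K ⊂ ℝ be a nondegenerate compact interval and let g : ℝ → ℝ be a differentiable map such that |g'(x) − g'(y)| ≤ H·|x−y|^α for all x, y ∈ ℝ, such that g'(x) ≥ m for every x ∈ ⋃_{n≥0} g^n(K), and such that diam(g^n(K)) ≤ C·ν^n for all n ≥ 0. Then for all nondegenerate compact intervals I, J ⊆ K the limit r(I:J) = lim_{n→∞} diam(g^n(I)) / diam(g^n(J)) exists and lies in (0,∞). (This is the well-definedness of the realised ratio functions of a C^{1+α} hyperbolic diffeomorphism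 along its invariant laminations.) -/
open Filter Topology Set

/-- Logarithm is `1/m`-Lipschitz on `[m, ∞)`. -/
lemma abs_log_sub_log_le_of_le {m a b : ℝ} (hm : 0 < m) (ha : m ≤ a) (hb : m ≤ b) :
    |Real.log a - Real.log b| ≤ |a - b| / m := by
  have key : ∀ x y : ℝ, m ≤ x → m ≤ y → x ≤ y → Real.log y - Real.log x ≤ |y - x| / m := by
    intro x y hx hy hxy
    have hx0 : 0 < x := lt_of_lt_of_le hm hx
    have hy0 : 0 < y := lt_of_lt_of_le hm hy
    have h1 : Real.log y - Real.log x = Real.log (y / x) := (Real.log_div hy0.ne' hx0.ne').symm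
    rw [h1]
    have h2 : Real.log (y / x) ≤ y / x - 1 := Real.log_le_sub_one_of_pos (by positivity)
    have h3 : y / x - 1 = (y - x) / x := by field_simp
    have h4 : (y - x) / x ≤ (y - x) / m :=
      div_le_div_of_nonneg_left (by linarith) hm hx
    have h5 : (y - x) / m ≤ |y - x| / m := by
      gcongr
      exact le_abs_self _
    linarith
  rw [abs_sub_le_iff]
  rcases le_total a b with h | h
  · have h1 := key a b ha hb h
    rw [abs_sub_comm]
    have h2 : Real.log a - Real.log b ≤ 0 := by
      have := Real.log_le_log (lt_of_lt_of_le hm ha) h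
      linarith
    have h3 : (0:ℝ) ≤ |b - a| / m := by positivity
    exact ⟨by linarith, h1⟩
  · have h1 := key b a hb ha h
    have h2 : Real.log b - Real.log a ≤ 0 := by
      have := Real.log_le_log (lt_of_lt_of_le hm hb) h
      linarith
    have h3 : (0:ℝ) ≤ |a - b| / m := by positivity
    exact ⟨h1, by linarith⟩

/-- **Well-definedness of realised ratio functions.**  Let `g : ℝ → ℝ` be differentiable
with `α`-Hölder derivative, with derivative bounded below by `m > 0` on the forward orbit
`⋃_{n} gⁿ(K)` of a nondegenerate compact interval `K = [u,v]`, and suppose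
`diam gⁿ(K) ≤ C νⁿ`.  Then for all nondegenerate compact subintervals `I, J ⊆ K` the ratios
`diam gⁿ(I) / diam gⁿ(J)` converge to a limit in `(0,∞)`. -/
theorem realised_ratio_function_well_defined
    (α : ℝ) (hα : α ∈ Set.Ioc (0 : ℝ) 1) (H : ℝ) (hH : 0 ≤ H)
    (m : ℝ) (hm : 0 < m) (C : ℝ) (hC : 0 < C) (ν : ℝ) (hν : ν ∈ Set.Ioo (0 : ℝ) 1)
    (u v : ℝ) (huv : u < v)
    (g : ℝ → ℝ) (hg : Differentiable ℝ g)
    (hHolder : ∀ x y : ℝ, |deriv g x - deriv g y| ≤ H * |x - y| ^ α)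
    (hderiv : ∀ x ∈ ⋃ n : ℕ, g^[n] '' Set.Icc u v, m ≤ deriv g x)
    (hdiam : ∀ n : ℕ, Metric.diam (g^[n] '' Set.Icc u v) ≤ C * ν ^ n)
    (p q : ℝ) (hup : u ≤ p) (hpq : p < q) (hqv : q ≤ v)
    (p' q' : ℝ) (hup' : u ≤ p') (hpq' : p' < q') (hqv' : q' ≤ v) :
    ∃ r : ℝ, 0 < r ∧
      Tendsto (fun n : ℕ =>
          Metric.diam (g^[n] '' Set.Icc p q) / Metric.diam (g^[n] '' Set.Icc p' q'))
        atTop (𝓝 r) := by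
  obtain ⟨hα0, hα1⟩ := hα
  obtain ⟨hν0, hν1⟩ := hν
  -- derivative bound on each `gⁿ(K)`
  have hderiv' : ∀ n : ℕ, ∀ x ∈ g^[n] '' Icc u v, m ≤ deriv g x := fun n x hx =>
    hderiv x (Set.mem_iUnion.2 ⟨n, hx⟩)
  -- strict monotonicity of `g` on each `gⁿ(K)`
  have hmono : ∀ n : ℕ, ∀ s : Set ℝ, s ⊆ g^[n] '' Icc u v → Convex ℝ s → StrictMonoOn g s := by
    intro n s hs hconv
    exact strictMonoOn_of_deriv_pos hconv hg.continuous.continuousOn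
      (fun x hx => lt_of_lt_of_le hm (hderiv' n x (hs (interior_subset hx))))
  -- images of subintervals under iterates
  have himg : ∀ n : ℕ, ∀ x y : ℝ, x ∈ Icc u v → y ∈ Icc u v → x ≤ y →
      g^[n] '' Icc x y = Icc (g^[n] x) (g^[n] y) := by
    intro n
    induction n with
    | zero => intro x y _ _ _; simp
    | succ n ih =>
      intro x y hx hy hxy
      have hxy' : g^[n] x ≤ g^[n] y := by
        have := ih x y hx hy hxy
        have hmem : g^[n] y ∈ Icc (g^[n] x) (g^[n] y) := by
          rw [← this]; exact ⟨y, ⟨hxy, le_refl y⟩, rfl⟩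
        exact hmem.1
      have hsub : Icc (g^[n] x) (g^[n] y) ⊆ g^[n] '' Icc u v := by
        rw [ih u v (left_mem_Icc.2 huv.le) (right_mem_Icc.2 huv.le) huv.le]
        intro z hz
        have h1 : g^[n] u ≤ g^[n] x := by
          have := ih u x (left_mem_Icc.2 huv.le) hx hx.1
          have hmem : g^[n] x ∈ Icc (g^[n] u) (g^[n] x) := by
            rw [← this]; exact ⟨x, ⟨hx.1, le_refl x⟩, rfl⟩
          exact hmem.1
        have h2 : g^[n] y ≤ g^[n] v := by
          have := ih y v hy (right_mem_Icc.2 huv.le) hy.2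
          have hmem : g^[n] y ∈ Icc (g^[n] y) (g^[n] v) := by
            rw [← this]; exact ⟨y, ⟨le_refl y, hy.2⟩, rfl⟩
          exact hmem.2
        exact ⟨le_trans h1 hz.1, le_trans hz.2 h2⟩
      have hmono' := hmono n _ hsub (convex_Icc _ _)
      have step : g '' Icc (g^[n] x) (g^[n] y) = Icc (g (g^[n] x)) (g (g^[n] y)) := by
        apply Subset.antisymm
        · intro z ⟨w, hw, hwz⟩
          subst hwz
          constructor
          · exact (hmono'.monotoneOn (left_mem_Icc.2 hxy') hw hw.1).trans_eq rfl
          · exact (hmono'.monotoneOn hw (right_mem_Icc.2 hxy') hw.2).trans_eq rfl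
        · exact intermediate_value_Icc hxy' hg.continuous.continuousOn
      calc g^[n+1] '' Icc x y = g '' (g^[n] '' Icc x y) := by
            rw [Function.iterate_succ', Set.image_comp]
        _ = g '' Icc (g^[n] x) (g^[n] y) := by rw [ih x y hx hy hxy]
        _ = Icc (g (g^[n] x)) (g (g^[n] y)) := step
        _ = Icc (g^[n+1] x) (g^[n+1] y) := by
            rw [Function.iterate_succ_apply', Function.iterate_succ_apply']
  -- ordering facts
  have hmemK : ∀ x : ℝ, x ∈ Icc u v → ∀ n : ℕ, g^[n] x ∈ Icc (g^[n] u) (g^[n] v) := by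
    intro x hx n
    have := himg n u v (left_mem_Icc.2 huv.le) (right_mem_Icc.2 huv.le) huv.le
    rw [← this]; exact ⟨x, hx, rfl⟩
  have hlt : ∀ n : ℕ, ∀ x y : ℝ, x ∈ Icc u v → y ∈ Icc u v → x < y →
      g^[n] x < g^[n] y := by
    intro n
    induction n with
    | zero => intro x y _ _ h; simpa using h
    | succ n ih =>
      intro x y hx hy hxy
      have h1 := ih x y hx hy hxy
      have hsub : g^[n] '' Icc u v ⊆ g^[n] '' Icc u v := Subset.rfl
      have hmono' := hmono n _ hsub (by
        rw [himg n u v (left_mem_Icc.2 huv.le) (right_mem_Icc.2 huv.le) huv.le]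
        exact convex_Icc _ _)
      rw [Function.iterate_succ_apply', Function.iterate_succ_apply']
      have hxm : g^[n] x ∈ g^[n] '' Icc u v := ⟨x, hx, rfl⟩
      have hym : g^[n] y ∈ g^[n] '' Icc u v := ⟨y, hy, rfl⟩
      exact hmono' hxm hym h1
  have huvK : (u : ℝ) ∈ Icc u v := left_mem_Icc.2 huv.le
  have hvK : (v : ℝ) ∈ Icc u v := right_mem_Icc.2 huv.le
  have hpK : p ∈ Icc u v := ⟨hup, le_trans hpq.le hqv⟩
  have hqK : q ∈ Icc u v := ⟨le_trans hup hpq.le, hqv⟩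
  have hpK' : p' ∈ Icc u v := ⟨hup', le_trans hpq'.le hqv'⟩
  have hqK' : q' ∈ Icc u v := ⟨le_trans hup' hpq'.le, hqv'⟩
  -- lengths
  set D : ℕ → ℝ := fun n => g^[n] q - g^[n] p with hD_def
  set D' : ℕ → ℝ := fun n => g^[n] q' - g^[n] p' with hD'_def
  have hD : ∀ n, 0 < D n := fun n => sub_pos.2 (hlt n p q hpK hqK hpq)
  have hD' : ∀ n, 0 < D' n := fun n => sub_pos.2 (hlt n p' q' hpK' hqK' hpq')
  have hdiamD : ∀ n, Metric.diam (g^[n] '' Icc p q) = D n := by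
    intro n
    rw [himg n p q hpK hqK hpq.le, Real.diam_Icc (hlt n p q hpK hqK hpq).le]
  have hdiamD' : ∀ n, Metric.diam (g^[n] '' Icc p' q') = D' n := by
    intro n
    rw [himg n p' q' hpK' hqK' hpq'.le, Real.diam_Icc (hlt n p' q' hpK' hqK' hpq').le]
  -- MVT points
  have hMVT : ∀ (a b : ℝ), a ∈ Icc u v → b ∈ Icc u v → a < b → ∀ n : ℕ,
      ∃ c ∈ Ioo (g^[n] a) (g^[n] b),
        g^[n+1] b - g^[n+1] a = deriv g c * (g^[n] b - g^[n] a) := by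
    intro a b ha hb hab n
    have hab' : g^[n] a < g^[n] b := hlt n a b ha hb hab
    obtain ⟨c, hc, hceq⟩ := exists_deriv_eq_slope g hab' hg.continuous.continuousOn
      (hg.differentiableOn)
    refine ⟨c, hc, ?_⟩
    rw [Function.iterate_succ_apply', Function.iterate_succ_apply']
    rw [eq_div_iff (sub_ne_zero.2 hab'.ne')] at hceq
    linarith [hceq]
  choose ξ hξmem hξeq using fun n => hMVT p q hpK hqK hpq n
  choose ξ' hξmem' hξeq' using fun n => hMVT p' q' hpK' hqK' hpq' n
  -- ξ n lies in gⁿ(K)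
  have hξK : ∀ n, ξ n ∈ Icc (g^[n] u) (g^[n] v) := by
    intro n
    have h1 := hmemK p hpK n
    have h2 := hmemK q hqK n
    exact ⟨le_trans h1.1 (hξmem n).1.le, le_trans (hξmem n).2.le h2.2⟩
  have hξK' : ∀ n, ξ' n ∈ Icc (g^[n] u) (g^[n] v) := by
    intro n
    have h1 := hmemK p' hpK' n
    have h2 := hmemK q' hqK' n
    exact ⟨le_trans h1.1 (hξmem' n).1.le, le_trans (hξmem' n).2.le h2.2⟩
  have hKn : ∀ n, g^[n] '' Icc u v = Icc (g^[n] u) (g^[n] v) := fun n =>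
    himg n u v huvK hvK huv.le
  have hmle : ∀ n, ∀ x ∈ Icc (g^[n] u) (g^[n] v), m ≤ deriv g x := by
    intro n x hx
    apply hderiv' n
    rw [hKn n]; exact hx
  -- distance bound between ξ and ξ'
  have hdist : ∀ n, |ξ n - ξ' n| ≤ C * ν ^ n := by
    intro n
    have huvn : g^[n] u ≤ g^[n] v := (hlt n u v huvK hvK huv).le
    have hdn : g^[n] v - g^[n] u ≤ C * ν ^ n := by
      have := hdiam n
      rwa [hKn n, Real.diam_Icc huvn] at this
    have h1 := hξK n
    have h2 := hξK' n
    rw [abs_le]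
    constructor <;> nlinarith [h1.1, h1.2, h2.1, h2.2]
  -- the summable correction terms
  set c : ℕ → ℝ := fun n => Real.log (deriv g (ξ n)) - Real.log (deriv g (ξ' n)) with hc_def
  have hcbound : ∀ n, |c n| ≤ (H * C ^ α / m) * (ν ^ α) ^ n := by
    intro n
    have hξm : m ≤ deriv g (ξ n) := hmle n _ (hξK n)
    have hξm' : m ≤ deriv g (ξ' n) := hmle n _ (hξK' n)
    have h1 : |c n| ≤ |deriv g (ξ n) - deriv g (ξ' n)| / m :=
      abs_log_sub_log_le_of_le hm hξm hξm'
    have h2 : |deriv g (ξ n) - deriv g (ξ' n)| ≤ H * |ξ n - ξ' n| ^ α := hHolder _ _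
    have h3 : |ξ n - ξ' n| ^ α ≤ (C * ν ^ n) ^ α :=
      Real.rpow_le_rpow (abs_nonneg _) (hdist n) hα0.le
    have h4 : (C * ν ^ n) ^ α = C ^ α * (ν ^ α) ^ n := by
      rw [Real.mul_rpow hC.le (by positivity), ← Real.rpow_natCast ν n,
        ← Real.rpow_natCast (ν ^ α) n, ← Real.rpow_mul hν0.le, ← Real.rpow_mul hν0.le,
        mul_comm α (n : ℝ)]
    calc |c n| ≤ |deriv g (ξ n) - deriv g (ξ' n)| / m := h1
      _ ≤ (H * |ξ n - ξ' n| ^ α) / m := by gcongr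
      _ ≤ (H * (C * ν ^ n) ^ α) / m := by
          have := mul_le_mul_of_nonneg_left h3 hH
          gcongr
      _ = (H * C ^ α / m) * (ν ^ α) ^ n := by rw [h4]; ring
  have hνα : ν ^ α < 1 := Real.rpow_lt_one hν0.le hν1 hα0
  have hνα0 : 0 ≤ ν ^ α := Real.rpow_nonneg hν0.le α
  have hsum : Summable c := by
    apply Summable.of_abs
    apply Summable.of_nonneg_of_le (fun n => abs_nonneg _) hcbound
    exact (summable_geometric_of_lt_one hνα0 hνα).mul_left _
  -- log-length recursion
  have hlog : ∀ n, Real.log (D n) - Real.log (D' n) =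
      (Real.log (D 0) - Real.log (D' 0)) + ∑ k ∈ Finset.range n, c k := by
    intro n
    induction n with
    | zero => simp
    | succ n ih =>
      have e1 : D (n + 1) = deriv g (ξ n) * D n := hξeq n
      have e2 : D' (n + 1) = deriv g (ξ' n) * D' n := hξeq' n
      have hξm : (0:ℝ) < deriv g (ξ n) := lt_of_lt_of_le hm (hmle n _ (hξK n))
      have hξm' : (0:ℝ) < deriv g (ξ' n) := lt_of_lt_of_le hm (hmle n _ (hξK' n))
      rw [e1, e2, Real.log_mul hξm.ne' (hD n).ne', Real.log_mul hξm'.ne' (hD' n).ne',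
        Finset.sum_range_succ]
      rw [hc_def]
      simp only []
      linarith [ih]
  -- convergence
  have htend : Tendsto (fun n => Real.log (D n) - Real.log (D' n)) atTop
      (𝓝 ((Real.log (D 0) - Real.log (D' 0)) + ∑' k, c k)) := by
    exact Tendsto.congr (fun n => (hlog n).symm)
      ((hsum.hasSum.tendsto_sum_nat).const_add _)
  set L : ℝ := (Real.log (D 0) - Real.log (D' 0)) + ∑' k, c k with hL
  refine ⟨Real.exp L, Real.exp_pos L, ?_⟩
  have hfinal : ∀ n, Metric.diam (g^[n] '' Icc p q) / Metric.diam (g^[n] '' Icc p' q')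
      = Real.exp (Real.log (D n) - Real.log (D' n)) := by
    intro n
    rw [hdiamD n, hdiamD' n, Real.exp_sub, Real.exp_log (hD n), Real.exp_log (hD' n)]
  exact Tendsto.congr (fun n => (hfinal n).symm)
    ((Real.continuous_exp.tendsto L).comp htend)
end
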